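/- arXiv:2601.12371 — 3 statements merged into one kernel-verified Lean document; each statement's English description precedes it below -/
import Mathlib

section
/- Let E be a skew left brace with an ideal I that is a trivial brace (i.e., + and ∘ coincide on I and (I,+) is abelian), and suppose additionally I ≤ ker(λ) and I ≤ Z(E,+) (i.e., I ≤ Soc(E)). If the group extension 0 → Λ_I → Λ_E → Λ_{E/I} → 0 splits as groups, then the skew brace extension 0 → I → E → E/I → 0 splits as skew braces. -/
/-- A skew left brace: a set with two group structures `(A, +)` and `(A, ∘)`
(here `∘` is `circ`, with inverse `sinv`) satisfying
`a ∘ (b + c) = (a ∘ b) - a + (a ∘ c)`. -/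
class SkewBrace (A : Type*) extends AddGroup A where
  circ : A → A → A
  circ_assoc : ∀ a b c : A, circ (circ a b) c = circ a (circ b c)
  zero_circ : ∀ a : A, circ 0 a = a
  circ_zero : ∀ a : A, circ a 0 = a
  sinv : A → A
  circ_sinv : ∀ a : A, circ a (sinv a) = 0
  sinv_circ : ∀ a : A, circ (sinv a) a = 0
  compat : ∀ a b c : A, circ a (b + c) = circ a b + -a + circ a c

namespace SkewBrace

variable {A : Type*} [SkewBrace A]

/-- The lambda map `λ_a(b) = -a + (a ∘ b)`. -/
def lam (a b : A) : A := -a + circ a b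

/-- `S` is (the carrier of) a sub-skew brace: a subgroup of both `(A,+)` and `(A,∘)`. -/
def IsSub (S : Set A) : Prop :=
  (0 : A) ∈ S ∧ (∀ a ∈ S, ∀ b ∈ S, a + b ∈ S) ∧ (∀ a ∈ S, -a ∈ S) ∧
    (∀ a ∈ S, ∀ b ∈ S, circ a b ∈ S) ∧ (∀ a ∈ S, sinv a ∈ S)

/-- `S` is (the carrier of) an ideal: a sub-skew brace normal in both group
structures and invariant under all `λ_a`. -/
def IsIdeal (S : Set A) : Prop :=
  IsSub S ∧ (∀ a : A, ∀ x ∈ S, -a + x + a ∈ S) ∧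
    (∀ a : A, ∀ x ∈ S, circ (sinv a) (circ x a) ∈ S) ∧
    (∀ a : A, ∀ x ∈ S, lam a x ∈ S)

/-- A skew brace homomorphism: preserves both operations. -/
def IsHom {B : Type*} [SkewBrace B] (f : A → B) : Prop :=
  (∀ x y : A, f (x + y) = f x + f y) ∧ ∀ x y : A, f (circ x y) = circ (f x) (f y)

/-- Multiplication of the semidirect product group `Λ_A = (A,+) ⋊_λ (A,∘)`. -/
def lmul (p q : A × A) : A × A := (p.1 + lam p.2 q.1, circ p.2 q.2)

end SkewBrace

open SkewBrace

namespace SkewBrace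
variable {A : Type*} [SkewBrace A]

lemma lam_add' (u p q : A) : lam u (p + q) = lam u p + lam u q := by
  simp only [lam, compat, add_assoc]

lemma zero_lam' (x : A) : lam (0:A) x = x := by simp [lam, zero_circ]

lemma lam_zero' (a : A) : lam a (0:A) = 0 := by simp [lam, circ_zero]

lemma circ_eq_add_lam (a b : A) : circ a b = a + lam a b := by
  simp only [lam]; rw [add_neg_cancel_left]

lemma circ_neg' (u v : A) : circ u (-v) = u + -(circ u v) + u := by
  have h := compat u v (-v)
  rw [add_neg_cancel, circ_zero] at h
  calc circ u (-v) = -(circ u v + -u) + (circ u v + -u + circ u (-v)) :=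
        (neg_add_cancel_left _ _).symm
    _ = -(circ u v + -u) + u := by rw [← h]
    _ = u + -(circ u v) + u := by rw [neg_add_rev, neg_neg, add_assoc]

lemma lam_circ' (u v w : A) : lam (circ u v) w = lam u (lam v w) := by
  simp only [lam]
  rw [compat, circ_neg', circ_assoc]
  simp [add_assoc]

end SkewBrace


/-- if `I ≤ Soc(E)` is a trivial-brace ideal and the induced group
extension `0 → Λ_I → Λ_E → Λ_{E/I} → 0` splits, then the skew brace extension
`0 → I → E → E/I → 0` splits. -/

theorem stmt_8 {E H : Type*} [SkewBrace E] [SkewBrace H]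
    (I : Set E) (hI : IsIdeal I)
    (htriv : ∀ x ∈ I, ∀ y ∈ I, SkewBrace.circ x y = x + y)
    (habel : ∀ x ∈ I, ∀ y ∈ I, x + y = y + x)
    (hkerlam : ∀ x ∈ I, ∀ e : E, lam x e = e)
    (hcen : ∀ x ∈ I, ∀ e : E, x + e = e + x)
    (π : E → H) (hπ : IsHom π) (hsurj : Function.Surjective π)
    (hkerπ : ∀ e : E, π e = 0 ↔ e ∈ I)
    (hsplit : ∃ S : H × H → E × E,
      (∀ p q : H × H, S (lmul p q) = lmul (S p) (S q)) ∧
      ∀ p : H × H, (π (S p).1, π (S p).2) = p) :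
    ∃ s : H → E, IsHom s ∧ ∀ h : H, π (s h) = h := by
  obtain ⟨S, hS, hsec⟩ := hsplit
  have hπadd := hπ.1
  have hπ0 : π 0 = 0 := by
    have h := hπadd 0 0
    rw [add_zero] at h
    exact (left_eq_add.mp h)
  have hπneg : ∀ x : E, π (-x) = -π x := by
    intro x
    have h := hπadd x (-x)
    rw [add_neg_cancel, hπ0] at h
    exact (neg_eq_of_add_eq_zero_right h.symm).symm
  have hπ1 : ∀ p : H × H, π (S p).1 = p.1 := fun p => congrArg Prod.fst (hsec p)
  have hπ2 : ∀ p : H × H, π (S p).2 = p.2 := fun p => congrArg Prod.snd (hsec p)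
  have hmemc : ∀ h : H, (S (h,0)).2 ∈ I := fun h => (hkerπ _).mp (hπ2 (h,0))
  have hmeme : ∀ h : H, (S (0,h)).1 ∈ I := fun h => (hkerπ _).mp (hπ1 (0,h))
  have hmemd : ∀ h : H, -(S (h,0)).1 + (S (0,h)).2 ∈ I := by
    intro h
    refine (hkerπ _).mp ?_
    rw [hπadd, hπneg, hπ1, hπ2]
    simp
  have hcircI : ∀ x ∈ I, ∀ z : E, SkewBrace.circ x z = x + z := by
    intro x hx z
    have h := hkerlam x hx z
    simp only [lam] at h
    conv_rhs => rw [← h]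
    rw [add_neg_cancel_left]
  have hlamI_left : ∀ x ∈ I, ∀ v z : E, lam (x + v) z = lam v z := by
    intro x hx v z
    rw [← hcircI x hx v, lam_circ', hkerlam x hx]
  have hlam_b : ∀ (h : H) (z : E), lam (S (0,h)).2 z = lam (S (h,0)).1 z := by
    intro h z
    have hd : (S (0,h)).2 = (-(S (h,0)).1 + (S (0,h)).2) + (S (h,0)).1 := by
      rw [hcen _ (hmemd h), add_neg_cancel_left]
    rw [hd, hlamI_left _ (hmemd h)]
  -- additivity of s
  have hadd : ∀ x x' : H, (S (x + x', 0)).1 = (S (x,0)).1 + (S (x',0)).1 := by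
    intro x x'
    have h := hS (x, 0) (x', 0)
    simp only [lmul, zero_lam', zero_circ] at h
    have h1 : (S (x + x', 0)).1 = (S (x,0)).1 + lam (S (x,0)).2 (S (x',0)).1 :=
      congrArg Prod.fst h
    rwa [hkerlam _ (hmemc x)] at h1
  -- diagonal decomposition
  have hdiagfst : ∀ h : H, (S (h,h)).1 = (S (h,0)).1 + (S (0,h)).1 := by
    intro h
    have h1 := hS (h, 0) (0, h)
    simp only [lmul, zero_circ, lam_zero', add_zero] at h1
    have h2 : (S (h,h)).1 = (S (h,0)).1 + lam (S (h,0)).2 (S (0,h)).1 :=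
      congrArg Prod.fst h1
    rwa [hkerlam _ (hmemc h)] at h2
  have hdiagsnd : ∀ h : H, (S (h,h)).2 = (S (h,0)).2 + (S (0,h)).2 := by
    intro h
    have h1 := hS (h, 0) (0, h)
    simp only [lmul, zero_circ, lam_zero', add_zero] at h1
    have h2 : (S (h,h)).2 = SkewBrace.circ (S (h,0)).2 (S (0,h)).2 :=
      congrArg Prod.snd h1
    rwa [hcircI _ (hmemc h)] at h2
  -- e-cocycle identity
  have hecoc : ∀ y y' : H, (S (0, SkewBrace.circ y y')).1
      = (S (0,y)).1 + lam (S (y,0)).1 (S (0,y')).1 := by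
    intro y y'
    have h1 := hS (0, y) (0, y')
    simp only [lmul, lam_zero', add_zero, zero_add] at h1
    have h2 : (S (0, SkewBrace.circ y y')).1
        = (S (0,y)).1 + lam (S (0,y)).2 (S (0,y')).1 := congrArg Prod.fst h1
    rwa [hlam_b] at h2
  -- multiplicativity of s
  have hmul : ∀ y y' : H, (S (SkewBrace.circ y y', 0)).1
      = SkewBrace.circ (S (y,0)).1 (S (y',0)).1 := by
    intro y y'
    have h1 := hS (y, y) (y', y')
    have hfix : (lmul (y,y) (y',y') : H × H)
        = (SkewBrace.circ y y', SkewBrace.circ y y') := by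
      simp only [lmul, lam]
      rw [add_neg_cancel_left]
    rw [hfix] at h1
    have h2 : (S (SkewBrace.circ y y', SkewBrace.circ y y')).1
        = (S (y,y)).1 + lam (S (y,y)).2 (S (y',y')).1 := congrArg Prod.fst h1
    rw [hdiagfst y, hdiagfst y', hdiagsnd y, hlamI_left _ (hmemc y), hlam_b,
      lam_add', hdiagfst (SkewBrace.circ y y'), hecoc y y'] at h2
    -- abbreviations
    set sy := (S (y,0)).1 with hsy
    set sy' := (S (y',0)).1 with hsy'
    set ey := (S (0,y)).1 with hey
    set ey' := (S (0,y')).1 with hey'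
    set L := lam sy sy' with hL
    set M := lam sy ey' with hM
    -- h2 : (S (c,0)).1 + (ey + M) = sy + ey + (L + M)
    have hce : ey + L = L + ey := hcen _ (hmeme y) L
    have h3 : (S (SkewBrace.circ y y', 0)).1 + (ey + M) = (sy + L) + (ey + M) := by
      rw [h2]
      calc sy + ey + (L + M) = sy + (ey + L + M) := by
            rw [add_assoc, add_assoc]
        _ = sy + (L + ey + M) := by rw [hce]
        _ = (sy + L) + (ey + M) := by rw [add_assoc L, ← add_assoc, ← add_assoc]
    have h4 := add_right_cancel h3
    rw [h4, circ_eq_add_lam]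
  exact ⟨fun h => (S (h, 0)).1, ⟨hadd, hmul⟩, fun h => hπ1 (h,0)⟩
end

section
/- Let E be a finite skew left brace and I an ideal with gcd(|I|, |E/I|) = 1. If H₁ is the unique complement of (I,+) in the group (E,+), then λ_g(H₁) = H₁ for all g ∈ E; in particular H₁ is a left ideal of E and hence a complement of I in the skew brace E. -/
open SkewBrace

section Aux
variable {A : Type*} [SkewBrace A]

theorem my_lam_add (a b c : A) : lam a (b + c) = lam a b + lam a c := by
  simp [lam, compat, add_assoc]

theorem my_lam_zero (a : A) : lam a 0 = 0 := by simp [lam, circ_zero]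

theorem my_zero_lam (b : A) : lam 0 b = b := by simp [lam, zero_circ]

theorem my_circ_neg (a b : A) : circ a (-b) = -(circ a b + -a) + a := by
  have h := compat a b (-b)
  rw [add_neg_cancel, circ_zero] at h
  exact eq_neg_add_iff_add_eq.2 h.symm

theorem my_lam_circ (a b c : A) : lam a (lam b c) = lam (circ a b) c := by
  unfold lam
  rw [compat, my_circ_neg, circ_assoc]
  simp [add_assoc]

theorem my_lam_inv_lam (g x : A) : lam (sinv g) (lam g x) = x := by
  rw [my_lam_circ, sinv_circ, my_zero_lam]

theorem my_lam_lam_inv (g x : A) : lam g (lam (sinv g) x) = x := by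
  rw [my_lam_circ, circ_sinv, my_zero_lam]

end Aux

/-- if `H₁` is the unique complement of `(I,+)` in `(E,+)` for a
Hall ideal `I`, then `λ_g(H₁) = H₁` for all `g`, so `H₁` is a left ideal and a
complement of `I` in the skew brace `E`. -/
theorem stmt_10 {E : Type*} [SkewBrace E] [Finite E] (I : Set E) (hI : IsIdeal I)
    (hcop : Nat.Coprime (Nat.card I) (Nat.card E / Nat.card I))
    (H₁ : AddSubgroup E)
    (hcomp : (∀ e : E, ∃ x ∈ I, ∃ h ∈ H₁, e = x + h) ∧ ∀ x ∈ I, x ∈ H₁ → x = 0)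
    (huniq : ∀ K : AddSubgroup E,
      ((∀ e : E, ∃ x ∈ I, ∃ h ∈ K, e = x + h) ∧ ∀ x ∈ I, x ∈ K → x = 0) →
        K = H₁) :
    (∀ g : E, lam g '' (H₁ : Set E) = (H₁ : Set E)) ∧
    IsSub (H₁ : Set E) := by
  have key : ∀ g : E, lam g '' (H₁ : Set E) = (H₁ : Set E) := by
    intro g
    let f : E →+ E := AddMonoidHom.mk' (lam g) (my_lam_add g)
    have hK : H₁.map f = H₁ := by
      apply huniq
      constructor
      · intro e
        obtain ⟨x, hx, h, hh, he⟩ := hcomp.1 (lam (sinv g) e)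
        refine ⟨lam g x, hI.2.2.2 g x hx, lam g h, ⟨h, hh, rfl⟩, ?_⟩
        have := congrArg (lam g) he
        rwa [my_lam_lam_inv, my_lam_add] at this
      · rintro x hx ⟨h, hh, rfl⟩
        have hxI : lam (sinv g) (f h) ∈ I := hI.2.2.2 (sinv g) _ hx
        rw [show f h = lam g h from rfl, my_lam_inv_lam] at hxI
        have : h = 0 := hcomp.2 h hxI hh
        simp [this, f, my_lam_zero]
    have : ((H₁.map f : AddSubgroup E) : Set E) = lam g '' (H₁ : Set E) := rfl
    rw [← this, hK]
  refine ⟨key, H₁.zero_mem, fun a ha b hb => H₁.add_mem ha hb,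
    fun a ha => H₁.neg_mem ha, ?_, ?_⟩
  · intro a ha b hb
    have hl : lam a b ∈ (H₁ : Set E) := by
      rw [← key a]; exact ⟨b, hb, rfl⟩
    have : circ a b = a + lam a b := by
      rw [lam, add_neg_cancel_left]
    rw [this]; exact H₁.add_mem ha hl
  · intro a ha
    have hl : lam (sinv a) a ∈ (H₁ : Set E) := by
      rw [← key (sinv a)]; exact ⟨a, ha, rfl⟩
    have : sinv a = -(lam (sinv a) a) := by
      rw [lam, sinv_circ, add_zero, neg_neg]
    rw [this]; exact H₁.neg_mem hl
end

section
/- Let E be a skew left brace, I an ideal of E that is a trivial brace of abelian type with I ≤ ker(λ), and let G₁, G₂ be two complements of I in E. Then the map f : E → E defined by f(u + g₁) := u + g₂, where u ∈ I, g₁ ∈ G₁ and g₂ is the unique element of G₂ such that g₁ ∈ I + g₂ (writing g₁ = x + g₂ with x ∈ I), is a skew brace automorphism of E fixing I pointwise and mapping G₁ onto G₂. -/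
open SkewBrace
namespace SkewBrace
variable {A : Type*} [SkewBrace A]

theorem circ_left_cancel {a b c : A} (h : circ a b = circ a c) : b = c := by
  have h2 := congrArg (circ (sinv a)) h
  rwa [← circ_assoc, ← circ_assoc, sinv_circ, zero_circ, zero_circ] at h2

theorem sinv_sinv' (a : A) : sinv (sinv a) = a :=
  circ_left_cancel (a := sinv a) (by rw [circ_sinv, sinv_circ])

theorem eq_sinv_of_circ_eq_zero {a b : A} (h : circ a b = 0) : b = sinv a := by
  apply circ_left_cancel (a := a); rw [h, circ_sinv]

theorem sinv_circ' (a b : A) : sinv (circ a b) = circ (sinv b) (sinv a) := by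
  symm
  apply eq_sinv_of_circ_eq_zero
  rw [circ_assoc, ← circ_assoc b, circ_sinv, zero_circ, circ_sinv]

end SkewBrace

open SkewBrace
/-- two complements of a trivial abelian-type ideal `I ≤ ker(λ)`
are conjugate by a skew brace automorphism of `E` fixing `I` pointwise. -/
theorem stmt_11 {E : Type*} [SkewBrace E] (I : Set E) (hI : IsIdeal I)
    (htriv : ∀ x ∈ I, ∀ y ∈ I, SkewBrace.circ x y = x + y)
    (habel : ∀ x ∈ I, ∀ y ∈ I, x + y = y + x)
    (hkerlam : ∀ x ∈ I, ∀ e : E, lam x e = e)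
    (G₁ G₂ : Set E) (hG₁ : IsSub G₁) (hG₂ : IsSub G₂)
    (hc₁ : (∀ e : E, ∃ x ∈ I, ∃ g ∈ G₁, e = x + g) ∧ ∀ x ∈ I, x ∈ G₁ → x = 0)
    (hc₂ : (∀ e : E, ∃ x ∈ I, ∃ g ∈ G₂, e = x + g) ∧ ∀ x ∈ I, x ∈ G₂ → x = 0) :
    ∃ f : E → E, Function.Bijective f ∧ IsHom f ∧ (∀ x ∈ I, f x = x) ∧
      f '' G₁ = G₂ ∧
      (∀ u ∈ I, ∀ g₁ ∈ G₁, ∀ x ∈ I, ∀ g₂ ∈ G₂,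
        g₁ = x + g₂ → f (u + g₁) = u + g₂) := by
  obtain ⟨⟨hI0, hIadd, hIneg, hIcirc, hIsinv⟩, hInormAdd, hInormCirc, hIlam⟩ := hI
  obtain ⟨hG₁0, hG₁add, hG₁neg, hG₁circ, hG₁sinv⟩ := hG₁
  obtain ⟨hG₂0, hG₂add, hG₂neg, hG₂circ, hG₂sinv⟩ := hG₂
  obtain ⟨hdec₁, hz₁⟩ := hc₁
  obtain ⟨hdec₂, hz₂⟩ := hc₂
  choose i₁ hi₁ p₁ hp₁ he₁ using hdec₁
  choose i₂ hi₂ p₂ hp₂ he₂ using hdec₂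
  -- basic facts about I
  have hcircI : ∀ x ∈ I, ∀ e : E, circ x e = x + e := by
    intro x hx e
    have h := hkerlam x hx e
    rw [lam] at h
    calc circ x e = x + (-x + circ x e) := (add_neg_cancel_left x _).symm
      _ = x + e := by rw [h]
  have hsinvI : ∀ x ∈ I, sinv x = -x := by
    intro x hx
    have h : x + sinv x = 0 := by rw [← hcircI x hx, circ_sinv]
    exact eq_neg_of_add_eq_zero_right h
  have hconjI : ∀ (a : E), ∀ x ∈ I, a + x + -a ∈ I := by
    intro a x hx
    have h := hInormAdd (-a) x hx
    simpa using h
  -- uniqueness of decompositions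
  have uniq : ∀ (G : Set E), (∀ a ∈ G, ∀ b ∈ G, a + b ∈ G) → (∀ a ∈ G, -a ∈ G) →
      (∀ x ∈ I, x ∈ G → x = 0) →
      ∀ u ∈ I, ∀ g ∈ G, ∀ u' ∈ I, ∀ g' ∈ G, u + g = u' + g' → u = u' ∧ g = g' := by
    intro G hGadd hGneg hz u hu g hg u' hu' g' hg' h
    have h1 : -u' + (u + g) = g' := by rw [h, neg_add_cancel_left]
    have hd : -u' + u = g' + -g := by rw [← h1]; simp [add_assoc]
    have hmemI : -u' + u ∈ I := hIadd _ (hIneg _ hu') _ hu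
    have hmemG : -u' + u ∈ G := hd ▸ hGadd _ hg' _ (hGneg _ hg)
    have h0 : -u' + u = 0 := hz _ hmemI hmemG
    have huu : u = u' := (neg_add_eq_zero.mp h0).symm
    subst huu
    exact ⟨rfl, add_left_cancel h⟩
  have uniq₁ := uniq G₁ hG₁add hG₁neg hz₁
  have uniq₂ := uniq G₂ hG₂add hG₂neg hz₂
  have key₁ : ∀ u ∈ I, ∀ g ∈ G₁, i₁ (u + g) = u ∧ p₁ (u + g) = g := fun u hu g hg =>
    uniq₁ _ (hi₁ _) _ (hp₁ _) u hu g hg (he₁ (u + g)).symm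
  have key₂ : ∀ u ∈ I, ∀ g ∈ G₂, i₂ (u + g) = u ∧ p₂ (u + g) = g := fun u hu g hg =>
    uniq₂ _ (hi₂ _) _ (hp₂ _) u hu g hg (he₂ (u + g)).symm
  -- additive decomposition of a sum
  have hadd_dec : ∀ (u g u' g' : E), (u + g) + (u' + g') = (u + (g + u' + -g)) + (g + g') := by
    intro u g u' g'
    simp [add_assoc]
  -- circ decomposition of a product
  have hvI : ∀ (g : E), ∀ x ∈ I, circ g (circ x (sinv g)) ∈ I := by
    intro g x hx
    have h := hInormCirc (sinv g) x hx
    rwa [sinv_sinv'] at h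
  have hswap : ∀ (g x : E), circ (circ g (circ x (sinv g))) g = circ g x := by
    intro g x
    rw [circ_assoc, circ_assoc, sinv_circ, circ_zero]
  have hcirc_dec : ∀ u ∈ I, ∀ (g : E), ∀ u' ∈ I, ∀ (g' : E),
      circ (u + g) (u' + g') = (u + circ g (circ u' (sinv g))) + circ g g' := by
    intro u hu g u' hu' g'
    have hvmem := hvI g u' hu'
    calc circ (u + g) (u' + g') = circ (circ u g) (circ u' g') := by
          rw [hcircI u hu, hcircI u' hu']
      _ = circ u (circ (circ g u') g') := by rw [circ_assoc, ← circ_assoc g]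
      _ = circ u (circ (circ (circ g (circ u' (sinv g))) g) g') := by rw [hswap]
      _ = circ (circ u (circ g (circ u' (sinv g)))) (circ g g') := by
          simp only [circ_assoc]
      _ = (u + circ g (circ u' (sinv g))) + circ g g' := by
          rw [hcircI u hu (circ g (circ u' (sinv g))), hcircI _ (hIadd _ hu _ hvmem)]
  -- conjugation inside I is trivial (additive version)
  have haconj : ∀ x ∈ I, ∀ c ∈ I, x + c + -x = c := by
    intro x hx c hc
    rw [habel x hx c hc, add_assoc, add_neg_cancel, add_zero]
  -- circ-conjugation of I-elements: replacing g = x + h by h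
  have hconjcirc : ∀ x ∈ I, ∀ (h : E), ∀ u' ∈ I,
      circ (x + h) (circ u' (sinv (x + h))) = circ h (circ u' (sinv h)) := by
    intro x hx h u' hu'
    have hw := hvI h u' hu'
    have hsi : sinv (x + h) = circ (sinv h) (-x) := by
      rw [← hcircI x hx h, sinv_circ', hsinvI x hx]
    rw [hsi, ← hcircI x hx h]
    calc circ (circ x h) (circ u' (circ (sinv h) (-x)))
        = circ x (circ (circ h (circ u' (sinv h))) (-x)) := by simp only [circ_assoc]
      _ = x + (circ h (circ u' (sinv h)) + -x) := by rw [hcircI _ hw, hcircI x hx]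
      _ = circ h (circ u' (sinv h)) := by rw [← add_assoc, haconj x hx _ hw]
  -- define f
  set f : E → E := fun e => i₁ e + p₂ (p₁ e) with hf
  have hfval : ∀ u ∈ I, ∀ g ∈ G₁, f (u + g) = u + p₂ g := by
    intro u hu g hg
    show i₁ (u + g) + p₂ (p₁ (u + g)) = u + p₂ g
    rw [(key₁ u hu g hg).1, (key₁ u hu g hg).2]
  have hrecov₁ : ∀ e : E, -(i₁ e) + e = p₁ e := by
    intro e
    nth_rewrite 2 [he₁ e]
    rw [neg_add_cancel_left]
  have hp₂0 : p₂ (0 : E) = 0 := by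
    have h := (key₂ 0 hI0 0 hG₂0).2
    simpa using h
  have hp₂add : ∀ g ∈ G₁, ∀ g' ∈ G₁, p₂ (g + g') = p₂ g + p₂ g' := by
    intro g hg g' hg'
    have h1 : g + g' = (i₂ g + (p₂ g + i₂ g' + -(p₂ g))) + (p₂ g + p₂ g') := by
      rw [← hadd_dec, ← he₂ g, ← he₂ g']
    rw [h1]
    exact (key₂ _ (hIadd _ (hi₂ g) _ (hconjI _ _ (hi₂ g'))) _
      (hG₂add _ (hp₂ g) _ (hp₂ g'))).2
  have hp₂circ : ∀ g ∈ G₁, ∀ g' ∈ G₁, p₂ (circ g g') = circ (p₂ g) (p₂ g') := by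
    intro g hg g' hg'
    have h1 : circ g g' =
        (i₂ g + circ (p₂ g) (circ (i₂ g') (sinv (p₂ g)))) + circ (p₂ g) (p₂ g') := by
      conv_lhs => rw [he₂ g, he₂ g', hcirc_dec _ (hi₂ g) _ _ (hi₂ g')]
    rw [h1]
    exact (key₂ _ (hIadd _ (hi₂ g) _ (hvI _ _ (hi₂ g'))) _
      (hG₂circ _ (hp₂ g) _ (hp₂ g'))).2
  refine ⟨f, ⟨?_, ?_⟩, ⟨?_, ?_⟩, ?_, ?_, ?_⟩
  · -- injective
    intro e e' h
    have he : e = i₁ e + p₁ e := he₁ e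
    have he' : e' = i₁ e' + p₁ e' := he₁ e'
    have h2 : i₁ e + p₂ (p₁ e) = i₁ e' + p₂ (p₁ e') := h
    obtain ⟨hu, hp⟩ := uniq₂ _ (hi₁ e) _ (hp₂ _) _ (hi₁ e') _ (hp₂ _) h2
    -- show p₁ e = p₁ e'
    have hg : p₁ e = p₁ e' := by
      have e1 : p₁ e = i₂ (p₁ e) + p₂ (p₁ e) := he₂ _
      have e2 : p₁ e' = i₂ (p₁ e') + p₂ (p₁ e') := he₂ _
      have hd : p₁ e + -(p₁ e') = i₂ (p₁ e) + -(i₂ (p₁ e')) := by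
        conv_lhs => rw [e1, e2]
        rw [hp]
        simp [add_assoc, neg_add_rev]
      have hmemI : p₁ e + -(p₁ e') ∈ I := by
        rw [hd]; exact hIadd _ (hi₂ _) _ (hIneg _ (hi₂ _))
      have hmemG : p₁ e + -(p₁ e') ∈ G₁ := hG₁add _ (hp₁ e) _ (hG₁neg _ (hp₁ e'))
      have h0 : p₁ e + -(p₁ e') = 0 := hz₁ _ hmemI hmemG
      have := add_neg_eq_zero.mp h0
      exact this
    rw [he, he', hu, hg]
  · -- surjective
    intro e
    refine ⟨i₂ e + p₁ (p₂ e), ?_⟩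
    have hpp : p₂ (p₁ (p₂ e)) = p₂ e := by
      rw [← hrecov₁ (p₂ e)]
      exact (key₂ _ (hIneg _ (hi₁ _)) _ (hp₂ e)).2
    have := hfval (i₂ e) (hi₂ e) (p₁ (p₂ e)) (hp₁ _)
    rw [this, hpp, ← he₂ e]
  · -- additive hom
    intro e e'
    have hE : e = i₁ e + p₁ e := he₁ e
    have hE' : e' = i₁ e' + p₁ e' := he₁ e'
    have hcI : p₂ (p₁ e) + i₁ e' + -(p₂ (p₁ e)) ∈ I := hconjI _ _ (hi₁ e')
    have hcI' : p₁ e + i₁ e' + -(p₁ e) ∈ I := hconjI _ _ (hi₁ e')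
    have hsum : e + e' = (i₁ e + (p₁ e + i₁ e' + -(p₁ e))) + (p₁ e + p₁ e') := by
      conv_lhs => rw [hE, hE']
      exact hadd_dec _ _ _ _
    have hmemI : i₁ e + (p₁ e + i₁ e' + -(p₁ e)) ∈ I := hIadd _ (hi₁ e) _ hcI'
    have hmemG : p₁ e + p₁ e' ∈ G₁ := hG₁add _ (hp₁ e) _ (hp₁ e')
    have hfe : f (e + e') = (i₁ e + (p₁ e + i₁ e' + -(p₁ e))) + p₂ (p₁ e + p₁ e') := by
      rw [hsum]; exact hfval _ hmemI _ hmemG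
    rw [hfe, hp₂add _ (hp₁ e) _ (hp₁ e')]
    -- RHS : f e + f e'
    show _ = (i₁ e + p₂ (p₁ e)) + (i₁ e' + p₂ (p₁ e'))
    rw [hadd_dec (i₁ e) (p₂ (p₁ e)) (i₁ e') (p₂ (p₁ e'))]
    -- need the two conjugates equal
    have hkey : p₁ e + i₁ e' + -(p₁ e) = p₂ (p₁ e) + i₁ e' + -(p₂ (p₁ e)) := by
      have hg : p₁ e = i₂ (p₁ e) + p₂ (p₁ e) := he₂ _
      set x := i₂ (p₁ e)
      set h := p₂ (p₁ e)
      set u' := i₁ e'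
      have hx : x ∈ I := hi₂ _
      have hu' : u' ∈ I := hi₁ e'
      have hc : h + u' + -h ∈ I := hconjI _ _ hu'
      calc p₁ e + u' + -(p₁ e) = x + (h + u' + -h) + -x := by
            rw [hg]; simp [add_assoc]
        _ = h + u' + -h := haconj x hx _ hc
    rw [hkey]
  · -- circ hom
    intro e e'
    have hE : e = i₁ e + p₁ e := he₁ e
    have hE' : e' = i₁ e' + p₁ e' := he₁ e'
    have hprod : circ e e' =
        (i₁ e + circ (p₁ e) (circ (i₁ e') (sinv (p₁ e)))) + circ (p₁ e) (p₁ e') := by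
      conv_lhs => rw [hE, hE']
      exact hcirc_dec _ (hi₁ e) _ _ (hi₁ e') _
    have hmemI : i₁ e + circ (p₁ e) (circ (i₁ e') (sinv (p₁ e))) ∈ I :=
      hIadd _ (hi₁ e) _ (hvI _ _ (hi₁ e'))
    have hmemG : circ (p₁ e) (p₁ e') ∈ G₁ := hG₁circ _ (hp₁ e) _ (hp₁ e')
    have hfe : f (circ e e') =
        (i₁ e + circ (p₁ e) (circ (i₁ e') (sinv (p₁ e)))) + p₂ (circ (p₁ e) (p₁ e')) := by
      rw [hprod]; exact hfval _ hmemI _ hmemG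
    rw [hfe, hp₂circ _ (hp₁ e) _ (hp₁ e')]
    show _ = circ (i₁ e + p₂ (p₁ e)) (i₁ e' + p₂ (p₁ e'))
    rw [hcirc_dec _ (hi₁ e) _ _ (hi₁ e')]
    have hkey : circ (p₁ e) (circ (i₁ e') (sinv (p₁ e)))
        = circ (p₂ (p₁ e)) (circ (i₁ e') (sinv (p₂ (p₁ e)))) := by
      conv_lhs => rw [he₂ (p₁ e)]
      exact hconjcirc _ (hi₂ _) _ _ (hi₁ e')
    rw [hkey]
  · -- fixes I
    intro x hx
    have h := hfval x hx 0 hG₁0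
    rw [add_zero] at h
    rw [h, hp₂0, add_zero]
  · -- image
    ext h
    constructor
    · rintro ⟨g, hg, rfl⟩
      have h1 : f g = p₂ g := by
        have := hfval 0 hI0 g hg
        simpa using this
      rw [h1]; exact hp₂ g
    · intro hh
      refine ⟨p₁ h, hp₁ h, ?_⟩
      have h2 : p₂ (p₁ h) = h := by
        rw [← hrecov₁ h]; exact (key₂ _ (hIneg _ (hi₁ h)) _ hh).2
      have := hfval 0 hI0 (p₁ h) (hp₁ h)
      simpa [h2] using this
  · -- explicit formula
    intro u hu g₁ hg₁ x hx g₂ hg₂ hdec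
    rw [hfval u hu g₁ hg₁]
    have : p₂ g₁ = g₂ := by rw [hdec]; exact (key₂ x hx g₂ hg₂).2
    rw [this]
end
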